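/- Every maximal tubing of a finite simple graph G=(V,E) has cardinality exactly |V| + |E|. -/

import Mathlib

set_option linter.unusedSectionVars false
set_option linter.unusedVariables false

open Finset

variable {V : Type} [Fintype V] [DecidableEq V]

/-- A tube of the finite simple graph on vertex type `V` with edge set `E`: a nonempty
connected (not necessarily induced) subgraph, recorded by its vertex and edge sets. -/
structure Tube (E : Finset (Sym2 V)) where
  verts : Finset V
  edges : Finset (Sym2 V)
  nonempty : verts.Nonempty
  edges_sub : edges ⊆ E
  endpoints_mem : ∀ e ∈ edges, ∀ v ∈ e, v ∈ verts
  conn : ∀ u ∈ verts, ∀ w ∈ verts,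
    Relation.ReflTransGen (fun a b => s(a, b) ∈ edges) u w

theorem Tube.ext' {E : Finset (Sym2 V)} {a b : Tube E}
    (h1 : a.verts = b.verts) (h2 : a.edges = b.edges) : a = b := by
  cases a; cases b; subst h1; subst h2; rfl

instance {E : Finset (Sym2 V)} : DecidableEq (Tube E) := fun a b =>
  decidable_of_iff (a.verts = b.verts ∧ a.edges = b.edges)
    ⟨fun h => Tube.ext' h.1 h.2, fun h => by subst h; exact ⟨rfl, rfl⟩⟩

/-- Tubes are partially ordered by inclusion: `t₁ ⊆ t₂` iff
`V(t₁) ⊆ V(t₂)` and `E(t₁) ⊆ E(t₂)`. -/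
instance {E : Finset (Sym2 V)} : PartialOrder (Tube E) where
  le a b := a.verts ⊆ b.verts ∧ a.edges ⊆ b.edges
  le_refl a := ⟨Finset.Subset.refl _, Finset.Subset.refl _⟩
  le_trans a b c h₁ h₂ := ⟨h₁.1.trans h₂.1, h₁.2.trans h₂.2⟩
  le_antisymm a b h₁ h₂ :=
    Tube.ext' (Finset.Subset.antisymm h₁.1 h₂.1) (Finset.Subset.antisymm h₁.2 h₂.2)

/-- A singleton tube: a single vertex and no edges. -/
def Tube.IsSingleton {E : Finset (Sym2 V)} (t : Tube E) : Prop :=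
  ∃ v : V, t.verts = {v} ∧ t.edges = ∅

/-- A tubing: a set of tubes, any two of which are disjoint or nested. -/
def IsTubing (E : Finset (Sym2 V)) (T : Finset (Tube E)) : Prop :=
  ∀ t₁ ∈ T, ∀ t₂ ∈ T,
    Disjoint t₁.verts t₂.verts ∨ t₁.edges ⊆ t₂.edges ∨ t₂.edges ⊆ t₁.edges

/-- A maximal tubing: a tubing maximal under inclusion. -/
def IsMaxTubing (E : Finset (Sym2 V)) (T : Finset (Tube E)) : Prop :=
  IsTubing E T ∧ ∀ T' : Finset (Tube E), IsTubing E T' → T ⊆ T' → T' = T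

/-!
The edge sets of the non-singleton tubes of a maximal tubing form a maximal family `F` of
nonempty connected edge sets, any two vertex-disjoint or nested, while every singleton tube
belongs to the tubing; so it suffices to show `|F| = |E|`. Say `A ∈ F` owns the edge `f` if
`A` is a minimal member of `F` containing `f`. Every edge lies in some member (glue it to the
members it touches), and its owner is unique since members sharing an edge are nested.
Conversely every `A ∈ F` owns exactly one edge. If it owned none, the maximal members
strictly inside `A` would be pairwise vertex-disjoint and would cover the connected set `A`,
so one of them would contain `A`. If it owned `f ≠ g`, gluing `f` to the members strictly
inside `A` that it touches would give, by maximality of `F`, a member strictly inside `A`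
that contains `f` (it misses `g`).
-/

namespace EdgeTubing

variable {A B : Finset (Sym2 V)} {F G : Finset (Finset (Sym2 V))} {e f g : Sym2 V} {u v w : V}

def edgeVerts (A : Finset (Sym2 V)) : Finset V := univ.filter fun v => ∃ e ∈ A, v ∈ e

lemma mem_edgeVerts : v ∈ edgeVerts A ↔ ∃ e ∈ A, v ∈ e := by
  simp [edgeVerts]

lemma mem_edgeVerts_of_mem (he : e ∈ A) (hv : v ∈ e) : v ∈ edgeVerts A :=
  mem_edgeVerts.2 ⟨e, he, hv⟩

lemma edgeVerts_mono (h : A ⊆ B) : edgeVerts A ⊆ edgeVerts B := fun v hv => by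
  obtain ⟨e, he, hv⟩ := mem_edgeVerts.1 hv
  exact mem_edgeVerts_of_mem (h he) hv

lemma not_disjoint_edgeVerts (hA : e ∈ A) (hB : e ∈ B) :
    ¬ Disjoint (edgeVerts A) (edgeVerts B) :=
  Finset.not_disjoint_iff.2
    ⟨e.out.1, mem_edgeVerts_of_mem hA e.out_fst_mem, mem_edgeVerts_of_mem hB e.out_fst_mem⟩

def Reach (A : Finset (Sym2 V)) : V → V → Prop :=
  Relation.ReflTransGen fun a b => s(a, b) ∈ A

lemma Reach.mono (h : A ⊆ B) (hr : Reach A u w) : Reach B u w :=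
  Relation.ReflTransGen.mono (fun _ _ hab => h hab) _ _ hr

lemma Reach.symm (hr : Reach A u w) : Reach A w u := by
  induction hr with
  | refl => exact .refl
  | tail _ hab ih => exact .head (by rwa [Sym2.eq_swap]) ih

lemma Reach.of_mem_of_mem (hf : f ∈ A) (hu : u ∈ f) (hw : w ∈ f) : Reach A u w := by
  induction f using Sym2.ind with
  | _ x y =>
    have hxy : Reach A x y := .single hf
    rw [Sym2.mem_iff] at hu hw
    rcases hu with rfl | rfl <;> rcases hw with rfl | rfl
    exacts [.refl, hxy, hxy.symm, .refl]

def EdgeConnected (A : Finset (Sym2 V)) : Prop :=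
  ∀ u ∈ edgeVerts A, ∀ w ∈ edgeVerts A, Reach A u w

def Compatible (A B : Finset (Sym2 V)) : Prop :=
  Disjoint (edgeVerts A) (edgeVerts B) ∨ A ⊆ B ∨ B ⊆ A

lemma Compatible.subset_or_subset (h : Compatible A B) (hA : e ∈ A) (hB : e ∈ B) :
    A ⊆ B ∨ B ⊆ A :=
  h.resolve_left (not_disjoint_edgeVerts hA hB)

structure IsEdgeTubing (F : Finset (Finset (Sym2 V))) : Prop where
  nonempty : ∀ A ∈ F, A.Nonempty
  edgeConnected : ∀ A ∈ F, EdgeConnected A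
  compatible : ∀ A ∈ F, ∀ B ∈ F, Compatible A B

structure IsMaxEdgeTubing (E : Finset (Sym2 V)) (F : Finset (Finset (Sym2 V))) : Prop
    extends IsEdgeTubing F where
  subset : ∀ A ∈ F, A ⊆ E
  maximal : ∀ B ⊆ E, B.Nonempty → EdgeConnected B → (∀ A ∈ F, Compatible B A) →
    B ∈ F

lemma IsEdgeTubing.mono (hF : IsEdgeTubing F) (hG : G ⊆ F) : IsEdgeTubing G where
  nonempty A hA := hF.nonempty A (hG hA)
  edgeConnected A hA := hF.edgeConnected A (hG hA)
  compatible A hA B hB := hF.compatible A (hG hA) B (hG hB)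

lemma IsEdgeTubing.pairwiseDisjoint_maximal (hF : IsEdgeTubing F) :
    {c | Maximal (· ∈ F) c}.PairwiseDisjoint edgeVerts := by
  intro c hc c' hc' hne
  rcases hF.compatible c hc.prop c' hc'.prop with hd | h | h
  · exact hd
  · exact absurd (hc.eq_of_le hc'.prop h) hne
  · exact absurd (hc'.eq_of_le hc.prop h).symm hne

def glue (G : Finset (Finset (Sym2 V))) (f : Sym2 V) : Finset (Sym2 V) :=
  insert f ((G.filter fun c => ∃ v ∈ edgeVerts c, v ∈ f).sup id)

lemma mem_glue :
    e ∈ glue G f ↔ e = f ∨ ∃ c ∈ G, (∃ v ∈ edgeVerts c, v ∈ f) ∧ e ∈ c := by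
  simp [glue, and_assoc]

lemma self_mem_glue : f ∈ glue G f :=
  mem_glue.2 (Or.inl rfl)

lemma subset_glue {c : Finset (Sym2 V)} (hc : c ∈ G) (hv : v ∈ edgeVerts c) (hvf : v ∈ f) :
    c ⊆ glue G f :=
  fun _ he => mem_glue.2 (Or.inr ⟨c, hc, ⟨v, hv, hvf⟩, he⟩)

lemma glue_subset (hf : f ∈ A) (h : ∀ c ∈ G, c ⊆ A) : glue G f ⊆ A := by
  intro e he
  rcases mem_glue.1 he with rfl | ⟨c, hc, -, hec⟩
  exacts [hf, h c hc hec]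

lemma edgeConnected_glue (h : ∀ c ∈ G, EdgeConnected c) : EdgeConnected (glue G f) := by
  have reach_end : ∀ v ∈ edgeVerts (glue G f), ∃ a ∈ f, Reach (glue G f) v a := by
    intro v hv
    obtain ⟨e, he, hve⟩ := mem_edgeVerts.1 hv
    rcases mem_glue.1 he with rfl | ⟨c, hc, ⟨a, hac, haf⟩, hec⟩
    · exact ⟨v, hve, .refl⟩
    · exact ⟨a, haf,
        (h c hc v (mem_edgeVerts_of_mem hec hve) a hac).mono (subset_glue hc hac haf)⟩
  intro u hu w hw
  obtain ⟨a, ha, hua⟩ := reach_end u hu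
  obtain ⟨b, hb, hwb⟩ := reach_end w hw
  exact (Relation.ReflTransGen.trans hua (Reach.of_mem_of_mem self_mem_glue ha hb)).trans hwb.symm

lemma compatible_glue (h : ∀ A ∈ G, ∀ B ∈ G, Compatible A B) (hA : A ∈ G) :
    Compatible (glue G f) A := by
  by_cases hsub : A ⊆ glue G f
  · exact Or.inr (Or.inr hsub)
  refine Or.inl (Finset.disjoint_right.2 fun v hvA hvg => hsub ?_)
  obtain ⟨e, he, hve⟩ := mem_edgeVerts.1 hvg
  rcases mem_glue.1 he with rfl | ⟨c, hc, ⟨w, hwc, hwf⟩, hec⟩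
  · exact subset_glue hA hvA hve
  rcases h A hA c hc with hd | hAc | hcA
  · exact absurd (mem_edgeVerts_of_mem hec hve) (Finset.disjoint_left.1 hd hvA)
  · exact hAc.trans (subset_glue hc hwc hwf)
  · exact subset_glue hA (edgeVerts_mono hcA hwc) hwf

lemma exists_subset_of_edgeConnected {C : Set (Finset (Sym2 V))} (hA : EdgeConnected A)
    (hne : A.Nonempty) (hcover : ∀ e ∈ A, ∃ c ∈ C, e ∈ c)
    (hC : C.PairwiseDisjoint edgeVerts) :
    ∃ c ∈ C, A ⊆ c := by
  obtain ⟨f, hf⟩ := hne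
  obtain ⟨c, hc, hfc⟩ := hcover f hf
  have mem_of_touch : ∀ e ∈ A, ∀ v ∈ e, v ∈ edgeVerts c → e ∈ c := by
    intro e he v hve hvc
    obtain ⟨c', hc', hec'⟩ := hcover e he
    obtain rfl : c = c' := by
      by_contra hcc'
      exact Finset.disjoint_left.1 (hC hc hc' hcc') hvc (mem_edgeVerts_of_mem hec' hve)
    exact hec'
  have reach_closed : ∀ u w, Reach A u w → u ∈ edgeVerts c → w ∈ edgeVerts c := by
    intro u w hr hu
    induction hr with
    | refl => exact hu
    | tail _ hab ih =>
      exact mem_edgeVerts_of_mem (mem_of_touch _ hab _ (Sym2.mem_mk_left _ _) ih)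
        (Sym2.mem_mk_right _ _)
  refine ⟨c, hc, fun e he => mem_of_touch e he _ e.out_fst_mem (reach_closed _ _ ?_
    (mem_edgeVerts_of_mem hfc f.out_fst_mem))⟩
  exact hA _ (mem_edgeVerts_of_mem hf f.out_fst_mem) _ (mem_edgeVerts_of_mem he e.out_fst_mem)

def Owns (F : Finset (Finset (Sym2 V))) (A : Finset (Sym2 V)) (f : Sym2 V) : Prop :=
  Minimal (fun B => B ∈ F ∧ f ∈ B) A

lemma IsEdgeTubing.owner_unique (hF : IsEdgeTubing F) (hA : Owns F A f) (hB : Owns F B f) :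
    A = B := by
  rcases (hF.compatible A hA.prop.1 B hB.prop.1).subset_or_subset hA.prop.2 hB.prop.2 with h | h
  exacts [hB.eq_of_le hA.prop h, hA.eq_of_le hB.prop h |>.symm]

lemma IsEdgeTubing.exists_owns (hF : IsEdgeTubing F) (hA : A ∈ F) : ∃ f, Owns F A f := by
  by_contra! hnone
  set S := F.filter (· ⊂ A)
  have hcover : ∀ e ∈ A, ∃ c ∈ {c | Maximal (· ∈ S) c}, e ∈ c := by
    intro e he
    obtain ⟨B, hBA, hBF, heB⟩ := (not_minimal_iff_exists_lt ⟨hA, he⟩).1 (hnone e)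
    obtain ⟨c, hBc, hc⟩ := S.exists_le_maximal (mem_filter.2 ⟨hBF, hBA⟩)
    exact ⟨c, hc, hBc heB⟩
  obtain ⟨c, hc, hAc⟩ := exists_subset_of_edgeConnected (hF.edgeConnected A hA)
    (hF.nonempty A hA) hcover (hF.mono (filter_subset _ F)).pairwiseDisjoint_maximal
  exact (mem_filter.1 hc.prop).2.not_subset hAc

lemma IsMaxEdgeTubing.exists_mem {E : Finset (Sym2 V)} (hF : IsMaxEdgeTubing E F) (hf : f ∈ E) :
    ∃ A ∈ F, f ∈ A :=
  ⟨glue F f, hF.maximal _ (glue_subset hf hF.subset) ⟨f, self_mem_glue⟩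
    (edgeConnected_glue hF.edgeConnected) fun _ hA => compatible_glue hF.compatible hA,
    self_mem_glue⟩

lemma IsMaxEdgeTubing.exists_owner {E : Finset (Sym2 V)} (hF : IsMaxEdgeTubing E F)
    (hf : f ∈ E) : ∃ A, Owns F A f := by
  obtain ⟨A, hA, hfA⟩ := hF.exists_mem hf
  obtain ⟨B, -, hB⟩ := (F.filter (f ∈ ·)).exists_le_minimal (mem_filter.2 ⟨hA, hfA⟩)
  exact ⟨B, by simpa [Owns] using hB⟩

lemma IsMaxEdgeTubing.owned_unique {E : Finset (Sym2 V)} (hF : IsMaxEdgeTubing E F)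
    (hf : Owns F A f) (hg : Owns F A g) : f = g := by
  by_contra hfg
  set S := F.filter (· ⊂ A)
  have hSF : S ⊆ F := filter_subset _ F
  have hglue_sub : glue S f ⊆ A := glue_subset hf.prop.2 fun c hc => (mem_filter.1 hc).2.subset
  have hg_glue : g ∉ glue S f := by
    intro hg'
    rcases mem_glue.1 hg' with rfl | ⟨c, hc, -, hgc⟩
    · exact hfg rfl
    · have hcA := (mem_filter.1 hc).2
      exact hcA.not_subset (hg.2 ⟨hSF hc, hgc⟩ hcA.subset)
  have hglue_lt : glue S f ⊂ A := (ssubset_iff_of_subset hglue_sub).2 ⟨g, hg.prop.2, hg_glue⟩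
  have hglue_mem : glue S f ∈ F := by
    refine hF.maximal _ (hglue_sub.trans (hF.subset A hf.prop.1)) ⟨f, self_mem_glue⟩
      (edgeConnected_glue (hF.mono hSF).edgeConnected) fun B hB => ?_
    rcases hF.compatible A hf.prop.1 B hB with hd | hAB | hBA
    · exact Or.inl (hd.mono_left (edgeVerts_mono hglue_sub))
    · exact Or.inr (Or.inl (hglue_sub.trans hAB))
    · rcases hBA.eq_or_ssubset with rfl | hBA
      · exact Or.inr (Or.inl hglue_sub)
      · exact compatible_glue (hF.mono hSF).compatible (mem_filter.2 ⟨hB, hBA⟩)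
  exact hglue_lt.not_subset (hf.2 ⟨hglue_mem, self_mem_glue⟩ hglue_lt.subset)

theorem IsMaxEdgeTubing.card_eq {E : Finset (Sym2 V)} (hF : IsMaxEdgeTubing E F) :
    #F = #E := by
  choose owned h_owns using fun A (hA : A ∈ F) => hF.exists_owns hA
  refine card_bij owned (fun A hA => hF.subset A hA (h_owns A hA).prop.2)
    (fun A hA B hB h => hF.owner_unique (h_owns A hA) (h ▸ h_owns B hB)) fun f hf => ?_
  obtain ⟨A, hA⟩ := hF.exists_owner hf
  exact ⟨A, hA.prop.1, hF.owned_unique (h_owns A hA.prop.1) hA⟩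

end EdgeTubing

open EdgeTubing

namespace Tube

variable {E : Finset (Sym2 V)}

lemma verts_eq_edgeVerts (t : Tube E) (h : t.edges.Nonempty) : t.verts = edgeVerts t.edges := by
  refine Subset.antisymm (fun u hu => ?_) fun u hu => ?_
  · obtain ⟨e, he⟩ := h
    have hu_reach := t.conn u hu _ (t.endpoints_mem e he _ e.out_fst_mem)
    rcases hu_reach.cases_head with rfl | ⟨c, hc, -⟩
    · exact mem_edgeVerts_of_mem he e.out_fst_mem
    · exact mem_edgeVerts_of_mem hc (Sym2.mem_mk_left _ _)
  · obtain ⟨e, he, hue⟩ := mem_edgeVerts.1 hu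
    exact t.endpoints_mem e he u hue

lemma edgeConnected (t : Tube E) (h : t.edges.Nonempty) : EdgeConnected t.edges := by
  rw [EdgeConnected, ← t.verts_eq_edgeVerts h]
  exact t.conn

lemma disjoint_or_nested_iff_compatible {t₁ t₂ : Tube E} (h₁ : t₁.edges.Nonempty)
    (h₂ : t₂.edges.Nonempty) :
    (Disjoint t₁.verts t₂.verts ∨ t₁.edges ⊆ t₂.edges ∨ t₂.edges ⊆ t₁.edges) ↔
      Compatible t₁.edges t₂.edges := by
  rw [Compatible, t₁.verts_eq_edgeVerts h₁, t₂.verts_eq_edgeVerts h₂]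

def ofEdges (B : Finset (Sym2 V)) (hBE : B ⊆ E) (hB : B.Nonempty) (hconn : EdgeConnected B) :
    Tube E where
  verts := edgeVerts B
  edges := B
  nonempty := hB.elim fun e he => ⟨_, mem_edgeVerts_of_mem he e.out_fst_mem⟩
  edges_sub := hBE
  endpoints_mem _ he _ hv := mem_edgeVerts_of_mem he hv
  conn := hconn

def single (E : Finset (Sym2 V)) (v : V) : Tube E where
  verts := {v}
  edges := ∅
  nonempty := singleton_nonempty v
  edges_sub := empty_subset E
  endpoints_mem _ he := absurd he (notMem_empty _)
  conn u hu w hw := by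
    rw [mem_singleton] at hu hw
    subst hu hw
    exact .refl

lemma single_injective : Function.Injective (single E) :=
  fun _ _ h => singleton_injective (congrArg Tube.verts h)

lemma eq_single (t : Tube E) (h : t.edges = ∅) (hv : v ∈ t.verts) : t = single E v := by
  refine Tube.ext' (Subset.antisymm (fun w hw => ?_) (singleton_subset_iff.2 hv)) h
  have hvw := t.conn v hv w hw
  rw [h, Relation.reflTransGen_iff_eq (fun _ => notMem_empty _)] at hvw
  exact mem_singleton.2 hvw

end Tube

namespace IsMaxTubing

variable {E : Finset (Sym2 V)} {T : Finset (Tube E)}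

lemma mem_of_forall (hT : IsMaxTubing E T) {t : Tube E}
    (ht : ∀ t' ∈ T,
      Disjoint t.verts t'.verts ∨ t.edges ⊆ t'.edges ∨ t'.edges ⊆ t.edges) :
    t ∈ T := by
  have htub : IsTubing E (insert t T) := by
    intro t₁ h₁ t₂ h₂
    rcases mem_insert.1 h₁ with rfl | h₁T <;> rcases mem_insert.1 h₂ with rfl | h₂T
    · exact Or.inr (Or.inl Subset.rfl)
    · exact ht t₂ h₂T
    · rcases ht t₁ h₁T with h | h | h
      exacts [Or.inl h.symm, Or.inr (Or.inr h), Or.inr (Or.inl h)]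
    · exact hT.1 t₁ h₁T t₂ h₂T
  exact hT.2 _ htub (subset_insert t T) ▸ mem_insert_self t T

lemma single_mem (hT : IsMaxTubing E T) (v : V) : Tube.single E v ∈ T :=
  hT.mem_of_forall fun _ _ => Or.inr (Or.inl (empty_subset _))

lemma isMaxEdgeTubing (hT : IsMaxTubing E T) :
    IsMaxEdgeTubing E ((T.filter (·.edges.Nonempty)).image Tube.edges) := by
  set F := (T.filter (·.edges.Nonempty)).image Tube.edges
  have mem_F : ∀ {A}, A ∈ F ↔ ∃ t ∈ T, t.edges.Nonempty ∧ t.edges = A := by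
    simp [F, and_assoc]
  refine ⟨⟨fun A hA => ?_, fun A hA => ?_, fun A hA B hB => ?_⟩, fun A hA => ?_, ?_⟩
  · obtain ⟨t, -, ht, rfl⟩ := mem_F.1 hA
    exact ht
  · obtain ⟨t, -, ht, rfl⟩ := mem_F.1 hA
    exact t.edgeConnected ht
  · obtain ⟨t₁, ht₁T, ht₁, rfl⟩ := mem_F.1 hA
    obtain ⟨t₂, ht₂T, ht₂, rfl⟩ := mem_F.1 hB
    exact (Tube.disjoint_or_nested_iff_compatible ht₁ ht₂).1 (hT.1 t₁ ht₁T t₂ ht₂T)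
  · obtain ⟨t, -, -, rfl⟩ := mem_F.1 hA
    exact t.edges_sub
  · intro B hBE hB hconn hcomp
    refine mem_F.2 ⟨Tube.ofEdges B hBE hB hconn, hT.mem_of_forall fun t ht => ?_, hB, rfl⟩
    by_cases h : t.edges.Nonempty
    · exact (Tube.disjoint_or_nested_iff_compatible hB h).2 (hcomp _ (mem_F.2 ⟨t, ht, h, rfl⟩))
    · exact Or.inr (Or.inr (not_nonempty_iff_eq_empty.1 h ▸ empty_subset _))

lemma card_filter_edges_not_nonempty (hT : IsMaxTubing E T) :
    #(T.filter fun t => ¬ t.edges.Nonempty) = Fintype.card V := by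
  rw [← card_univ, ← card_image_of_injective univ Tube.single_injective]
  congr 1
  ext t
  simp only [mem_filter, mem_image, mem_univ, true_and, not_nonempty_iff_eq_empty]
  constructor
  · rintro ⟨-, h⟩
    obtain ⟨v, hv⟩ := t.nonempty
    exact ⟨v, (t.eq_single h hv).symm⟩
  · rintro ⟨v, rfl⟩
    exact ⟨hT.single_mem v, rfl⟩

lemma card_filter_edges_nonempty (hT : IsMaxTubing E T) :
    #(T.filter (·.edges.Nonempty)) = #E := by
  rw [← hT.isMaxEdgeTubing.card_eq]
  refine (card_image_of_injOn fun t₁ h₁ t₂ h₂ h => Tube.ext' ?_ h).symm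
  rw [t₁.verts_eq_edgeVerts (mem_filter.1 h₁).2, t₂.verts_eq_edgeVerts (mem_filter.1 h₂).2,
    h]

end IsMaxTubing

theorem statement8_general (E : Finset (Sym2 V))
    (T : Finset (Tube E)) (hT : IsMaxTubing E T) :
    T.card = Fintype.card V + E.card := by
  rw [← card_filter_add_card_filter_not (s := T) (·.edges.Nonempty),
    hT.card_filter_edges_nonempty, hT.card_filter_edges_not_nonempty, add_comm]

/-- Every maximal tubing of a finite simple graph `G = (V, E)` has
cardinality exactly `|V| + |E|`. -/
theorem statement8 (E : Finset (Sym2 V)) (hE : ∀ e ∈ E, ¬ e.IsDiag)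
    (T : Finset (Tube E)) (hT : IsMaxTubing E T) :
    T.card = Fintype.card V + E.card :=
  statement8_general E T hT
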